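/- Fix N ∈ ℕ and 0 = t_0 < t_1 < ⋯ < t_s = N. For m = 1,…,s let η_m ∈ ℂ^N equal (t_m − t_{m−1})^{−1/2} on {t_{m−1}+1,…,t_m} and 0 elsewhere, and let (Aη_m)_k = N^{−1/2} ∑_{j=1}^N (η_m)_j e^{2πi jk/N}. Then for every m = 1,…,s and every k ∈ ℤ with 1 ≤ |k| ≤ ⌈N/2⌉, |(Aη_m)_k| ≤ (π/√2)·min{ √(t_m − t_{m−1})/√N, √N/(|k|·√(t_m − t_{m−1})) }, and for k = 0, |(Aη_m)_0| ≤ √(t_m − t_{m−1})/√N. -/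

import Mathlib

/-!
Up to the factor `(√N · √L)⁻¹`, with `L = t_m - t_{m-1}`, the coefficient `(Aη_m)_k` is the
geometric sum `∑_{t_{m-1} < j ≤ t_m} ζ^j` with `ζ = e^{2πik/N}` on the unit circle. Bounding it
termwise by `L` gives `√L/√N`; summing it gives at most `2/|ζ - 1| = 1/|sin(πk/N)|`, and Jordan's
inequality on both halves of `[0, π]` gives `|sin(πk/N)| ≥ |k|/N` for `1 ≤ |k| ≤ ⌈N/2⌉`, hence
`√N/(|k|√L)`. Both bounds already hold without the factor `π/√2 ≥ 1`.
-/

/-- The (unitary) DFT of `y : ℂ^N` (entries `y 1, …, y N`) at frequency `k ∈ ℤ`. -/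
noncomputable def dft (N : ℕ) (y : ℕ → ℂ) (k : ℤ) : ℂ :=
  (Real.sqrt N)⁻¹ * ∑ j ∈ Finset.Icc 1 N, y j *
    Complex.exp (2 * Real.pi * Complex.I * (j : ℂ) * (k : ℂ) / (N : ℂ))

/-- `η_m ∈ ℂ^N`: equal to `(t_m - t_{m-1})^{-1/2}` on `{t_{m-1}+1,…,t_m}`, `0` elsewhere. -/
noncomputable def eta (t : ℕ → ℕ) (m : ℕ) (i : ℕ) : ℂ :=
  if t (m - 1) < i ∧ i ≤ t m then ((Real.sqrt (t m - t (m - 1)) : ℂ))⁻¹ else 0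

open Finset Real
open Complex (I)
open scoped Complex

section GeomSum

variable {𝕜 : Type*} [NormedDivisionRing 𝕜] {z : 𝕜}

theorem norm_sum_Ioc_pow_le_sub (hz : ‖z‖ ≤ 1) {a b : ℕ} (hab : a ≤ b) :
    ‖∑ j ∈ Ioc a b, z ^ j‖ ≤ (b : ℝ) - a := by
  calc ‖∑ j ∈ Ioc a b, z ^ j‖ ≤ ∑ j ∈ Ioc a b, (1 : ℝ) :=
        norm_sum_le_of_le _ fun j _ ↦ by simpa only [norm_pow] using pow_le_one₀ (norm_nonneg z) hz
    _ = (b : ℝ) - a := by simp [Nat.cast_sub hab]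

theorem norm_sum_Ioc_pow_le_two_div (hz : ‖z‖ ≤ 1) (hz1 : z ≠ 1) {a b : ℕ} (hab : a ≤ b) :
    ‖∑ j ∈ Ioc a b, z ^ j‖ ≤ 2 / ‖z - 1‖ := by
  have hpow (n : ℕ) : ‖z ^ n‖ ≤ 1 := by simpa only [norm_pow] using pow_le_one₀ (norm_nonneg z) hz
  rw [← Ico_add_one_add_one_eq_Ioc, geom_sum_Ico hz1 (by omega), norm_div]
  gcongr
  calc ‖z ^ (b + 1) - z ^ (a + 1)‖ ≤ ‖z ^ (b + 1)‖ + ‖z ^ (a + 1)‖ := norm_sub_le _ _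
    _ ≤ 2 := by linarith [hpow (b + 1), hpow (a + 1)]

end GeomSum

theorem two_div_pi_mul_min_le_sin {x : ℝ} (hx0 : 0 ≤ x) (hxπ : x ≤ π) :
    2 / π * min x (π - x) ≤ sin x := by
  rcases le_total x (π / 2) with hx | hx
  · exact (mul_le_mul_of_nonneg_left (min_le_left _ _) (by positivity)).trans (mul_le_sin hx0 hx)
  · rw [← sin_pi_sub]
    exact (mul_le_mul_of_nonneg_left (min_le_right _ _) (by positivity)).trans
      (mul_le_sin (by linarith) (by linarith))

theorem div_le_sin_pi_mul_div {N K : ℕ} (hN : 2 ≤ N) (hK : 1 ≤ K) (hKN : 2 * K ≤ N + 1) :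
    (K : ℝ) / N ≤ sin (π * K / N) := by
  have hN0 : (0 : ℝ) < N := by positivity
  have h3K : (3 * K : ℝ) ≤ 2 * N := by exact_mod_cast (by omega : 3 * K ≤ 2 * N)
  have hKN' : (K : ℝ) ≤ N := by exact_mod_cast (by omega : K ≤ N)
  refine le_trans ?_ (two_div_pi_mul_min_le_sin (by positivity) ?_)
  · rw [mul_min_of_nonneg _ _ (by positivity)]
    refine le_min ?_ ?_
    · rw [div_le_iff₀ hN0]
      field_simp
      linarith
    · rw [div_le_iff₀ hN0]
      field_simp
      linarith
  · rw [div_le_iff₀ hN0]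
    nlinarith [pi_pos]

theorem abs_div_le_abs_sin_pi_mul_div {N : ℕ} {k : ℤ} (hN : 2 ≤ N) (hk : 1 ≤ k.natAbs)
    (hkN : 2 * k.natAbs ≤ N + 1) : |(k : ℝ)| / N ≤ |sin (π * k / N)| := by
  obtain ⟨K, rfl | rfl⟩ := Int.eq_nat_or_neg k <;>
    simp only [Int.natAbs_neg, Int.natAbs_natCast] at hk hkN <;>
    push_cast <;>
    simp only [abs_neg, mul_neg, neg_div, sin_neg, Nat.abs_cast] <;>
    exact (div_le_sin_pi_mul_div hN hk hkN).trans (le_abs_self _)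

theorem cexp_two_pi_I_mul_div_eq_pow (N j : ℕ) (k : ℤ) :
    cexp (2 * π * I * j * k / N) = cexp (I * ↑(2 * π * k / N)) ^ j := by
  rw [← Complex.exp_nat_mul]
  push_cast
  ring_nf

section

variable {N : ℕ} {t : ℕ → ℕ} {m : ℕ}

theorem norm_dft_eta (hmN : t m ≤ N) (k : ℤ) :
    ‖dft N (eta t m) k‖ = ‖∑ j ∈ Ioc (t (m - 1)) (t m), cexp (I * ↑(2 * π * k / N)) ^ j‖ /
      (√N * √((t m : ℝ) - t (m - 1))) := by
  have hsupp : Icc 1 N ∩ Ioc (t (m - 1)) (t m) = Ioc (t (m - 1)) (t m) :=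
    inter_eq_right.mpr fun j hj ↦ by simp only [mem_Ioc, mem_Icc] at hj ⊢; omega
  have hsum : ∑ j ∈ Icc 1 N, eta t m j * cexp (2 * π * I * j * k / N) =
      (√((t m : ℝ) - t (m - 1)) : ℂ)⁻¹ *
        ∑ j ∈ Ioc (t (m - 1)) (t m), cexp (I * ↑(2 * π * k / N)) ^ j := by
    simp only [eta, ite_mul, zero_mul, ← mem_Ioc, sum_ite_mem, hsupp, mul_sum,
      cexp_two_pi_I_mul_div_eq_pow]
  rw [dft, hsum, norm_mul, norm_mul, norm_inv, Complex.norm_real, Complex.norm_real, norm_inv,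
    norm_of_nonneg (sqrt_nonneg _), norm_of_nonneg (sqrt_nonneg _)]
  ring

theorem norm_dft_eta_le_sqrt_div (hstep : t (m - 1) ≤ t m) (hmN : t m ≤ N) (k : ℤ) :
    ‖dft N (eta t m) k‖ ≤ √((t m : ℝ) - t (m - 1)) / √N := by
  rw [norm_dft_eta hmN]
  calc _ ≤ ((t m : ℝ) - t (m - 1)) / (√N * √((t m : ℝ) - t (m - 1))) := by
        gcongr
        exact norm_sum_Ioc_pow_le_sub (Complex.norm_exp_I_mul_ofReal _).le hstep
    _ = _ := by rw [div_mul_eq_div_div_swap, div_sqrt]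

theorem norm_dft_eta_le_sqrt_div_abs_mul (hstep : t (m - 1) < t m) (hmN : t m ≤ N) {k : ℤ}
    (hk : 1 ≤ k.natAbs) (hkN : 2 * k.natAbs ≤ N + 1) :
    ‖dft N (eta t m) k‖ ≤ √N / (|(k : ℝ)| * √((t m : ℝ) - t (m - 1))) := by
  have hL : (0 : ℝ) < (t m : ℝ) - t (m - 1) := by
    rw [sub_pos]; exact_mod_cast hstep
  have hk0 : (0 : ℝ) < |(k : ℝ)| := by
    rw [abs_pos, Int.cast_ne_zero]; omega
  rcases lt_or_ge N 2 with hN | hN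
  · have hN1 : N = 1 := by omega
    have hL1 : (t m : ℝ) - t (m - 1) = 1 := by
      rw [show t m = 1 by omega, show t (m - 1) = 0 by omega]; norm_num
    have hk1 : |(k : ℝ)| = 1 := by
      rw [← Int.cast_abs, Int.abs_eq_natAbs, show k.natAbs = 1 by omega]; norm_num
    simpa [hN1, hL1, hk1] using norm_dft_eta_le_sqrt_div hstep.le hmN k
  · set ζ := cexp (I * ↑(2 * π * k / N))
    have hsin := abs_div_le_abs_sin_pi_mul_div hN hk hkN
    have hN0 : (0 : ℝ) < N := by positivity
    have hζ1 : ‖ζ - 1‖ = 2 * |sin (π * k / N)| := by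
      rw [Complex.norm_exp_I_mul_ofReal_sub_one, norm_mul, Real.norm_two, Real.norm_eq_abs]
      ring_nf
    have hsin0 : 0 < |sin (π * k / N)| := (div_pos hk0 hN0).trans_le hsin
    have hζ : ζ ≠ 1 := fun h ↦ by rw [h, sub_self, norm_zero] at hζ1; linarith
    rw [norm_dft_eta hmN]
    calc _ ≤ (2 / ‖ζ - 1‖) / (√N * √((t m : ℝ) - t (m - 1))) := by
          gcongr
          exact norm_sum_Ioc_pow_le_two_div (Complex.norm_exp_I_mul_ofReal _).le hζ hstep.le
      _ ≤ (N / |(k : ℝ)|) / (√N * √((t m : ℝ) - t (m - 1))) := by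
          gcongr ?_ / _
          rw [hζ1, div_le_div_iff₀ (by positivity) hk0]
          rw [div_le_iff₀ hN0] at hsin
          linarith
      _ = _ := by
          field_simp
          rw [sq_sqrt hN0.le]

end

theorem stmt13_general (N s : ℕ) (t : ℕ → ℕ)
    (hts : t s = N) (hmono : ∀ i < s, t i < t (i + 1)) :
    ∀ m ∈ Finset.Icc 1 s,
      (∀ k : ℤ, 1 ≤ k.natAbs → k.natAbs ≤ (N + 1) / 2 →
        ‖dft N (eta t m) k‖ ≤
          (Real.pi / Real.sqrt 2) *
            min (Real.sqrt (t m - t (m - 1)) / Real.sqrt N)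
              (Real.sqrt N / (|(k : ℝ)| * Real.sqrt (t m - t (m - 1))))) ∧
      ‖dft N (eta t m) 0‖ ≤ Real.sqrt (t m - t (m - 1)) / Real.sqrt N := by
  intro m hm
  obtain ⟨hm1, hms⟩ := mem_Icc.mp hm
  have hstep : t (m - 1) < t m := by
    simpa only [Nat.sub_add_cancel hm1] using hmono (m - 1) (by omega)
  have hmN : t m ≤ N := hts ▸ (strictMonoOn_Iic_of_lt_succ (by simpa using hmono)).monotoneOn
    (Set.mem_Iic.mpr hms) Set.self_mem_Iic hms
  have hπ : 1 ≤ π / √2 := by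
    rw [le_div_iff₀ (by positivity), one_mul]
    nlinarith [sqrt_two_lt_three_halves, pi_gt_three]
  refine ⟨fun k hk hkN ↦ ?_, norm_dft_eta_le_sqrt_div hstep.le hmN 0⟩
  calc _ ≤ min _ _ := le_min (norm_dft_eta_le_sqrt_div hstep.le hmN k)
        (norm_dft_eta_le_sqrt_div_abs_mul hstep hmN hk (by omega))
    _ ≤ _ := le_mul_of_one_le_left (by positivity) hπ

theorem stmt13 (N s : ℕ) (t : ℕ → ℕ)
    (ht0 : t 0 = 0) (hts : t s = N) (hmono : ∀ i < s, t i < t (i + 1)) :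
    ∀ m ∈ Finset.Icc 1 s,
      (∀ k : ℤ, 1 ≤ k.natAbs → k.natAbs ≤ (N + 1) / 2 →
        ‖dft N (eta t m) k‖ ≤
          (Real.pi / Real.sqrt 2) *
            min (Real.sqrt (t m - t (m - 1)) / Real.sqrt N)
              (Real.sqrt N / (|(k : ℝ)| * Real.sqrt (t m - t (m - 1))))) ∧
      ‖dft N (eta t m) 0‖ ≤ Real.sqrt (t m - t (m - 1)) / Real.sqrt N :=
  stmt13_general N s t hts hmono
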